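/- arXiv:2412.06615 — 2 statements merged into one kernel-verified Lean document; each statement's English description precedes it below -/
import Mathlib

section
/- With the setup of a Poisson point process m on (E, ℰ, μ) with intensity r·μ and sets A_x, A_y of finite measure, the covariance Cov(1_{m(A_x) odd}, 1_{m(A_y) odd}) = (e^{-2rμ(A_x Δ A_y)} - e^{-2r(μ(A_x)+μ(A_y))})/4, and this quantity is nonnegative. -/
/-!
`U`, `V`, `W` are the counts `m(A \ B)`, `m(B \ A)`, `m(A ∩ B)`, so `m(A) = U + W` and
`m(B) = V + W`. A Poisson count `N` of mean `ρ` is odd with probability `(1 - e^{-2ρ})/2`, because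
`E[(-1)^N] = e^{-2ρ}`. Since `{a + b odd}` is the symmetric difference of `{a odd}` and `{b odd}`,
`P(a, b both odd) = (P(a odd) + P(b odd) - P(a + b odd))/2`, and `(U + W) + (V + W)` has the parity
of `U + V`. Sums of independent Poisson variables are Poisson, so all three probabilities are
explicit, and the covariance collapses to
`(e^{-2r(μ(A∖B) + μ(B∖A))} - e^{-2r(μ(A) + μ(B))})/4`, which is nonnegative because
`μ(A) + μ(B) ≥ μ(A Δ B)`.
-/

open Real MeasureTheory ProbabilityTheory
open scoped NNReal ENNReal Nat

lemma integral_neg_one_pow_poissonMeasure (ρ : ℝ≥0) :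
    ∫ n, (-1 : ℝ) ^ n ∂Po(ρ) = exp (-(2 * ρ)) := by
  rw [integral_poissonMeasure]
  calc ∑' n, (exp (-ρ) * ρ ^ n / n !) • (-1 : ℝ) ^ n
      = ∑' n, exp (-ρ) * ((-ρ : ℝ) ^ n / n !) := by
        congr with n
        rw [smul_eq_mul, neg_pow]
        ring
    _ = exp (-ρ) * exp (-ρ) := by
        rw [tsum_mul_left, (NormedSpace.expSeries_div_hasSum_exp (-ρ : ℝ)).tsum_eq,
          exp_eq_exp_ℝ]
    _ = exp (-(2 * ρ)) := by
        rw [← exp_add]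
        ring_nf

lemma poissonMeasure_real_odd (ρ : ℝ≥0) :
    Po(ρ).real {n | Odd n} = (1 - exp (-(2 * ρ))) / 2 := by
  have hind : {n : ℕ | Odd n}.indicator 1 = fun n ↦ (1 - (-1 : ℝ) ^ n) / 2 := by
    ext n
    rcases n.even_or_odd with h | h
    · simp [h.neg_one_pow, Nat.not_odd_iff_even.2 h]
    · simp [h.neg_one_pow, h]
  have hint : Integrable (fun n : ℕ ↦ (-1 : ℝ) ^ n) Po(ρ) :=
    .of_bound (measurable_of_countable _).aestronglyMeasurable 1 (ae_of_all _ fun n ↦ by simp)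
  rw [← integral_indicator_one .of_discrete, hind, integral_div,
    integral_sub (integrable_const 1) hint, integral_const, integral_neg_one_pow_poissonMeasure]
  simp

lemma ProbabilityTheory.HasLaw.measureReal_odd_of_poissonMeasure {Ω : Type*}
    [MeasurableSpace Ω] {P : Measure Ω} {X : Ω → ℕ} {ρ : ℝ≥0} (hX : HasLaw X Po(ρ) P) :
    P.real {ω | Odd (X ω)} = (1 - exp (-(2 * ρ))) / 2 := by
  rw [hX.measureReal_eq .of_discrete, poissonMeasure_real_odd]

lemma measureReal_inter_eq_add_sub_symmDiff_div_two {α : Type*} [MeasurableSpace α]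
    {μ : Measure α} {s t : Set α} (hs : MeasurableSet s) (ht : MeasurableSet t)
    (hμs : μ s ≠ ∞ := by finiteness) (hμt : μ t ≠ ∞ := by finiteness) :
    μ.real (s ∩ t) = (μ.real s + μ.real t - μ.real (symmDiff s t)) / 2 := by
  have hs' := measureReal_inter_add_sdiff ht hμs
  have ht' := measureReal_inter_add_sdiff hs hμt
  rw [Set.inter_comm] at ht'
  rw [measureReal_symmDiff_eq hs ht hμs hμt]
  linarith

lemma setOf_odd_add_eq_symmDiff {Ω : Type*} (a b : Ω → ℕ) :
    {ω | Odd (a ω + b ω)} = symmDiff {ω | Odd (a ω)} {ω | Odd (b ω)} := by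
  ext ω
  simp only [Set.mem_ofPred_eq, Set.mem_symmDiff, Nat.odd_add, ← Nat.not_odd_iff_even]
  tauto

lemma measureReal_odd_add_and_odd_add {Ω : Type*} [MeasurableSpace Ω] (P : Measure Ω)
    [IsFiniteMeasure P] {a b c : Ω → ℕ} (ha : Measurable a) (hb : Measurable b)
    (hc : Measurable c) :
    P.real {ω | Odd (a ω + c ω) ∧ Odd (b ω + c ω)}
      = (P.real {ω | Odd (a ω + c ω)} + P.real {ω | Odd (b ω + c ω)}
          - P.real {ω | Odd (a ω + b ω)}) / 2 := by
  have hsum : {ω | Odd (a ω + b ω)}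
      = symmDiff {ω | Odd (a ω + c ω)} {ω | Odd (b ω + c ω)} := by
    rw [← setOf_odd_add_eq_symmDiff]
    ext ω
    simp only [Set.mem_ofPred_eq]
    rw [show a ω + c ω + (b ω + c ω) = a ω + b ω + 2 * c ω by ring,
      Nat.odd_add (m := a ω + b ω)]
    simp
  have hac : MeasurableSet {ω | Odd (a ω + c ω)} := (ha.add hc) (t := {n | Odd n}) .of_discrete
  have hbc : MeasurableSet {ω | Odd (b ω + c ω)} := (hb.add hc) (t := {n | Odd n}) .of_discrete
  rw [hsum]
  exact measureReal_inter_eq_add_sub_symmDiff_div_two hac hbc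

/-- For a Poisson point process `m` with intensity `r·μ` and sets `A`, `B` of finite
measure, the counts `U = m(A \ B)`, `V = m(B \ A)`, `W = m(A ∩ B)` are independent
Poisson random variables, `m(A) = U + W` and `m(B) = V + W`. The covariance of the
odd-count indicators is `(e^{-2rμ(A Δ B)} - e^{-2r(μ(A)+μ(B))})/4 ≥ 0`. -/
theorem ppp_odd_cov {E Ω : Type*} [MeasurableSpace E] [MeasurableSpace Ω]
    (μ : Measure E) (P : Measure Ω) [IsProbabilityMeasure P]
    (A B : Set E) (hA : MeasurableSet A) (hB : MeasurableSet B)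
    (hAfin : μ A ≠ ⊤) (hBfin : μ B ≠ ⊤)
    (r : ℝ) (hr : 0 < r)
    (U V W : Ω → ℕ) (hU : Measurable U) (hV : Measurable V) (hW : Measurable W)
    (hIndep : iIndepFun ![U, V, W] P)
    (hlawU : Measure.map U P = poissonMeasure (r * (μ (A \ B)).toReal).toNNReal)
    (hlawV : Measure.map V P = poissonMeasure (r * (μ (B \ A)).toReal).toNNReal)
    (hlawW : Measure.map W P = poissonMeasure (r * (μ (A ∩ B)).toReal).toNNReal) :
    (P {ω | Odd (U ω + W ω) ∧ Odd (V ω + W ω)}).toReal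
        - (P {ω | Odd (U ω + W ω)}).toReal * (P {ω | Odd (V ω + W ω)}).toReal
      = (Real.exp (-2 * r * (μ (symmDiff A B)).toReal)
          - Real.exp (-2 * r * ((μ A).toReal + (μ B).toReal))) / 4 ∧
    0 ≤ (Real.exp (-2 * r * (μ (symmDiff A B)).toReal)
          - Real.exp (-2 * r * ((μ A).toReal + (μ B).toReal))) / 4 := by
  have hUW : IndepFun U W P := hIndep.indepFun (i := 0) (j := 2) (by decide)
  have hVW : IndepFun V W P := hIndep.indepFun (i := 1) (j := 2) (by decide)
  have hUV : IndepFun U V P := hIndep.indepFun (i := 0) (j := 1) (by decide)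
  have hoddUW := (hUW.hasLaw_add_poissonMeasure ⟨hU.aemeasurable, hlawU⟩
    ⟨hW.aemeasurable, hlawW⟩).measureReal_odd_of_poissonMeasure
  have hoddVW := (hVW.hasLaw_add_poissonMeasure ⟨hV.aemeasurable, hlawV⟩
    ⟨hW.aemeasurable, hlawW⟩).measureReal_odd_of_poissonMeasure
  have hoddUV := (hUV.hasLaw_add_poissonMeasure ⟨hU.aemeasurable, hlawU⟩
    ⟨hV.aemeasurable, hlawV⟩).measureReal_odd_of_poissonMeasure
  have hjoint := measureReal_odd_add_and_odd_add P hU hV hW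
  have hcoe (s : Set E) : ((r * μ.real s).toNNReal : ℝ) = r * μ.real s :=
    Real.coe_toNNReal _ (by positivity)
  simp only [← measureReal_def, Pi.add_apply, NNReal.coe_add, hcoe] at hoddUW hoddVW hoddUV ⊢
  rw [measureReal_symmDiff_eq hA hB, ← measureReal_sdiff_add_inter hB hAfin,
    ← measureReal_sdiff_add_inter hA hBfin, Set.inter_comm B A]
  set X := μ.real (A \ B)
  set Y := μ.real (B \ A)
  set Z := μ.real (A ∩ B)
  have hZ : 0 ≤ Z := measureReal_nonneg
  refine ⟨?_, div_nonneg (sub_nonneg.2 (exp_le_exp.2 (by nlinarith))) zero_le_four⟩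
  rw [hjoint, hoddUW, hoddVW, hoddUV, show -2 * r * (X + Y) = -(2 * (r * X + r * Y)) by ring,
    show -2 * r * (X + Z + (Y + Z)) = -(2 * (r * X + r * Z)) + -(2 * (r * Y + r * Z)) by ring,
    exp_add]
  ring
end

section
/- Let f : [0,∞) → ℝ be bounded measurable with ∫₀^∞ |f(s)| ds < ∞ and ∫₁^∞ |f(s)| log s ds < ∞. Then the double integral ∫₀^∞ ∫₀^∞ |f(s) f(t)| |log((s+t)/|s-t|)| ds dt is finite. -/
/-!
For `s, t > 0`, `|log ((s + t) / |s - t|)|` is at most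
`log (1 + s) + log (1 + t) + log⁺ (s - t)⁻¹`.
The first two terms give products of `∫ |f|` and `∫ |f s| log (1 + s)`, and the latter is
finite since `log (1 + s) ≤ log 2 + log⁺ s`. For the third, `|f t| ≤ C` and translation
invariance bound the inner integral by `C ∫ log⁺ u⁻¹ du`, which is finite because `log` is
integrable on `[-1, 1]`.
-/

open Real MeasureTheory Set

namespace Real

theorem abs_log_add_div_abs_sub_le {s t : ℝ} (hs : 0 < s) (ht : 0 < t) :
    |log ((s + t) / |s - t|)| ≤ log (1 + s) + log (1 + t) + log⁺ (s - t)⁻¹ := by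
  have hlog_s : 0 ≤ log (1 + s) := log_nonneg (by linarith)
  have hlog_t : 0 ≤ log (1 + t) := log_nonneg (by linarith)
  rcases eq_or_ne s t with rfl | hne
  · simp only [sub_self, abs_zero, div_zero, log_zero, inv_zero, posLog_zero]
    linarith
  have hd : 0 < |s - t| := abs_pos.mpr (sub_ne_zero.mpr hne)
  have hst : 0 < s + t := by linarith
  have hquot : 1 ≤ (s + t) / |s - t| :=
    (one_le_div hd).mpr (abs_le.mpr ⟨by linarith, by linarith⟩)
  have hnum : log (s + t) ≤ log (1 + s) + log (1 + t) := by
    rw [← log_mul (by linarith) (by linarith)]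
    exact log_le_log hst (by nlinarith)
  have hden : -log |s - t| ≤ log⁺ (s - t)⁻¹ := by
    have := posLog_sub_posLog_inv (x := s - t)
    rw [log_abs]
    linarith [posLog_nonneg (x := s - t)]
  rw [abs_of_nonneg (log_nonneg hquot), log_div hst.ne' hd.ne']
  linarith

theorem posLog_inv_eq_indicator :
    (fun u : ℝ => log⁺ u⁻¹) = (Icc (-1) 1).indicator (fun u => -log u) := by
  funext u
  by_cases hu : |u| ≤ 1
  · rw [indicator_of_mem (show u ∈ Icc (-1) 1 from abs_le.mp hu)]
    have := posLog_sub_posLog_inv (x := u)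
    rw [(posLog_eq_zero_iff u).2 hu] at this
    linarith
  · rw [indicator_of_notMem (show u ∉ Icc (-1) 1 from fun h => hu (abs_le.mpr h)),
      posLog_eq_zero_iff, abs_inv]
    exact inv_le_one_of_one_le₀ (not_le.mp hu).le

theorem integrable_posLog_inv : Integrable (fun u : ℝ => log⁺ u⁻¹) := by
  rw [posLog_inv_eq_indicator]
  have hlog : IntegrableOn log (Icc (-1) 1) :=
    (intervalIntegrable_iff_integrableOn_Icc_of_le (by norm_num)).1
      intervalIntegral.intervalIntegrable_log'
  exact hlog.neg.integrable_indicator measurableSet_Icc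

end Real

theorem setLIntegral_ofReal_mul_log_one_add_ne_top {g : ℝ → ℝ} (hg : Measurable g)
    (hL1 : ∫⁻ s in Ioi 0, ENNReal.ofReal (g s) ≠ ⊤)
    (hlog : ∫⁻ s in Ioi 1, ENNReal.ofReal (g s * log s) ≠ ⊤) :
    ∫⁻ s in Ioi 0, ENNReal.ofReal (g s * log (1 + s)) ≠ ⊤ := by
  have hpointwise : ∀ s ∈ Ioi (0 : ℝ), ENNReal.ofReal (g s * log (1 + s)) ≤
      ENNReal.ofReal (log 2) * ENNReal.ofReal (g s) +
        (Ioi 1).indicator (fun s => ENNReal.ofReal (g s * log s)) s := by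
    intro s (hs : 0 < s)
    rcases le_or_gt (g s) 0 with hg_nonpos | hg_pos
    · rw [ENNReal.ofReal_of_nonpos (mul_nonpos_of_nonpos_of_nonneg hg_nonpos
        (log_nonneg (by linarith)))]
      exact bot_le
    have hlog_le : log (1 + s) ≤ log 2 + log⁺ s := by
      have := posLog_add (x := 1) (y := s)
      rwa [posLog_one, add_zero, posLog_eq_log (by rw [abs_of_pos (by linarith)]; linarith)]
        at this
    have hposLog : ENNReal.ofReal (g s * log⁺ s) =
        (Ioi 1).indicator (fun s => ENNReal.ofReal (g s * log s)) s := by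
      by_cases h : s ∈ Ioi 1
      · rw [indicator_of_mem h, posLog_eq_log (by rw [abs_of_pos hs]; exact le_of_lt h)]
      · rw [indicator_of_notMem h,
          (posLog_eq_zero_iff s).2 (by rw [abs_of_pos hs]; exact not_lt.mp h),
          mul_zero, ENNReal.ofReal_zero]
    calc ENNReal.ofReal (g s * log (1 + s))
        ≤ ENNReal.ofReal (log 2 * g s + g s * log⁺ s) := ENNReal.ofReal_le_ofReal (by nlinarith)
      _ ≤ ENNReal.ofReal (log 2 * g s) + ENNReal.ofReal (g s * log⁺ s) := ENNReal.ofReal_add_le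
      _ = _ := by rw [ENNReal.ofReal_mul (log_nonneg one_le_two), hposLog]
  refine ne_top_of_le_ne_top ?_ (setLIntegral_mono' measurableSet_Ioi hpointwise)
  rw [lintegral_add_left (by fun_prop), lintegral_const_mul _ (by fun_prop)]
  have hindicator := (setLIntegral_le_lintegral (Ioi (0 : ℝ)) _).trans_eq
    (lintegral_indicator (μ := volume) (measurableSet_Ioi (a := 1))
      fun s ↦ ENNReal.ofReal (g s * log s))
  exact ENNReal.add_ne_top.2 ⟨by finiteness, ne_top_of_le_ne_top hlog hindicator⟩

theorem ofReal_abs_mul_log_kernel_le {s t C : ℝ} (hs : 0 < s) (ht : 0 < t) (x : ℝ) {y : ℝ}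
    (hy : |y| ≤ C) :
    ENNReal.ofReal (|x * y| * |log ((s + t) / |s - t|)|) ≤
      ENNReal.ofReal (|x| * log (1 + s)) * ENNReal.ofReal |y| +
        ENNReal.ofReal |x| * ENNReal.ofReal (|y| * log (1 + t)) +
        ENNReal.ofReal |x| * (ENNReal.ofReal C * ENNReal.ofReal (log⁺ (s - t)⁻¹)) := by
  have hlog_s : 0 ≤ log (1 + s) := log_nonneg (by linarith)
  have hlog_t : 0 ≤ log (1 + t) := log_nonneg (by linarith)
  have hC : 0 ≤ C := (abs_nonneg y).trans hy
  have hkernel := abs_log_add_div_abs_sub_le hs ht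
  have hx := abs_nonneg x
  have hy' := abs_nonneg y
  have hk : |y| * log⁺ (s - t)⁻¹ ≤ C * log⁺ (s - t)⁻¹ :=
    mul_le_mul_of_nonneg_right hy posLog_nonneg
  calc ENNReal.ofReal (|x * y| * |log ((s + t) / |s - t|)|)
      ≤ ENNReal.ofReal (|x| * log (1 + s) * |y| + |x| * (|y| * log (1 + t)) +
          |x| * (C * log⁺ (s - t)⁻¹)) := by
        refine ENNReal.ofReal_le_ofReal ?_
        rw [abs_mul]
        nlinarith [mul_le_mul_of_nonneg_left hkernel (mul_nonneg hx hy'),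
          mul_le_mul_of_nonneg_left hk hx]
    _ = _ := by
        have hK := posLog_nonneg (x := (s - t)⁻¹)
        rw [ENNReal.ofReal_add (by positivity) (by positivity),
          ENNReal.ofReal_add (by positivity) (by positivity),
          ENNReal.ofReal_mul (mul_nonneg hx hlog_s),
          ENNReal.ofReal_mul (q := |y| * log (1 + t)) hx,
          ENNReal.ofReal_mul (q := C * log⁺ (s - t)⁻¹) hx, ENNReal.ofReal_mul hC]

theorem setLIntegral_log_kernel_le {f : ℝ → ℝ} (hf : Measurable f) {C : ℝ}
    (hbdd : ∀ s, |f s| ≤ C) {s : ℝ} (hs : 0 < s) :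
    ∫⁻ t in Ioi 0, ENNReal.ofReal (|f s * f t| * |log ((s + t) / |s - t|)|) ≤
      ENNReal.ofReal (|f s| * log (1 + s)) * (∫⁻ t in Ioi 0, ENNReal.ofReal |f t|) +
        ENNReal.ofReal |f s| * (∫⁻ t in Ioi 0, ENNReal.ofReal (|f t| * log (1 + t))) +
        ENNReal.ofReal |f s| * (ENNReal.ofReal C * ∫⁻ u, ENNReal.ofReal (log⁺ u⁻¹)) := by
  calc _ ≤ ∫⁻ t in Ioi 0, (ENNReal.ofReal (|f s| * log (1 + s)) * ENNReal.ofReal |f t| +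
        ENNReal.ofReal |f s| * ENNReal.ofReal (|f t| * log (1 + t)) +
        ENNReal.ofReal |f s| * (ENNReal.ofReal C * ENNReal.ofReal (log⁺ (s - t)⁻¹))) :=
        setLIntegral_mono' measurableSet_Ioi fun t ht =>
          ofReal_abs_mul_log_kernel_le hs ht _ (hbdd t)
    _ = ENNReal.ofReal (|f s| * log (1 + s)) * (∫⁻ t in Ioi 0, ENNReal.ofReal |f t|) +
        ENNReal.ofReal |f s| * (∫⁻ t in Ioi 0, ENNReal.ofReal (|f t| * log (1 + t))) +
        ENNReal.ofReal |f s| *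
          (ENNReal.ofReal C * ∫⁻ t in Ioi 0, ENNReal.ofReal (log⁺ (s - t)⁻¹)) := by
        rw [lintegral_add_right _ (by fun_prop), lintegral_add_left (by fun_prop),
          lintegral_const_mul _ (by fun_prop), lintegral_const_mul _ (by fun_prop),
          lintegral_const_mul _ (by fun_prop), lintegral_const_mul _ (by fun_prop)]
    _ ≤ _ := by
        gcongr _ + _ * (_ * ?_)
        exact (setLIntegral_le_lintegral _ _).trans_eq
          (lintegral_sub_left_eq_self (fun u => ENNReal.ofReal (log⁺ u⁻¹)) s)

theorem log_kernel_double_integral_finite (f : ℝ → ℝ) (hf : Measurable f)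
    (C : ℝ) (hbdd : ∀ s, |f s| ≤ C)
    (hL1 : ∫⁻ s in Set.Ioi (0 : ℝ), ENNReal.ofReal |f s| ≠ ⊤)
    (hlog : ∫⁻ s in Set.Ioi (1 : ℝ), ENNReal.ofReal (|f s| * Real.log s) ≠ ⊤) :
    ∫⁻ s in Set.Ioi (0 : ℝ), ∫⁻ t in Set.Ioi (0 : ℝ),
        ENNReal.ofReal (|f s * f t| * |Real.log ((s + t) / |s - t|)|) ≠ ⊤ := by
  have hmoment := setLIntegral_ofReal_mul_log_one_add_ne_top hf.abs hL1 hlog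
  have hkernel : ∫⁻ u, ENNReal.ofReal (log⁺ u⁻¹) ≠ ⊤ :=
    integrable_posLog_inv.lintegral_lt_top.ne
  refine ne_top_of_le_ne_top ?_
    (setLIntegral_mono' measurableSet_Ioi fun s hs => setLIntegral_log_kernel_le hf hbdd hs)
  rw [lintegral_add_right _ (by fun_prop), lintegral_add_left (by fun_prop),
    lintegral_mul_const _ (by fun_prop), lintegral_mul_const _ (by fun_prop),
    lintegral_mul_const _ (by fun_prop)]
  finiteness
end
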